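/- arXiv:1601.07657 — 12 statements merged into one kernel-verified Lean document; each statement's English description precedes it below -/
import Mathlib

section
/- Let R be a chained (valuation) ring with zero divisors, and let I = {x ∈ R | x² = 0}. Then I² = 0, and for every x ∈ R with x ∉ I, the annihilator (0 : x) is contained in I. -/
universe u v

/-- A chained (valuation) ring: the ideals are totally ordered by inclusion. -/
def IsChainedRing (R : Type*) [CommRing R] : Prop :=
  ∀ I J : Ideal R, I ≤ J ∨ J ≤ I

/-- `R` has zero divisors. -/
def HasZeroDivisors (R : Type*) [CommRing R] : Prop :=
  ∃ a b : R, a ≠ 0 ∧ b ≠ 0 ∧ a * b = 0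

/-- An arithmetical ring: the localization at every maximal ideal is a chained ring. -/
def IsArithmetical (R : Type*) [CommRing R] : Prop :=
  ∀ (P : Ideal R) (hP : P.IsMaximal),
    letI := hP.isPrime
    ∀ I J : Ideal (Localization.AtPrime P), I ≤ J ∨ J ≤ I

/-- `FlatDimLE R n M` : the flat (weak) dimension of `M` is at most `n`. -/
def FlatDimLE (R : Type u) [CommRing R] : ℕ → ModuleCat.{u} R → Prop
  | 0, M => Module.Flat R M
  | (n+1), M => ∃ (F : ModuleCat.{u} R) (f : F →ₗ[R] M), Function.Surjective f ∧
      Module.Flat R F ∧ FlatDimLE R n (ModuleCat.of R (LinearMap.ker f))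

/-- The flat (weak) dimension of a module, valued in `ℕ∞` (`⊤` if no finite flat resolution). -/
noncomputable def flatDim (R : Type u) [CommRing R] (M : ModuleCat.{u} R) : ℕ∞ :=
  sInf {n : ℕ∞ | ∃ k : ℕ, n = (k : ℕ∞) ∧ FlatDimLE R k M}

/-- The weak global dimension of `R` is at most `n`. -/
def WgdimLE (R : Type u) [CommRing R] (n : ℕ) : Prop :=
  ∀ M : ModuleCat.{u} R, FlatDimLE R n M

/-- The weak global dimension of `R` is infinite. -/
def HasInfiniteWeakGlobalDimension (R : Type u) [CommRing R] : Prop :=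
  ∀ n : ℕ, ∃ M : ModuleCat.{u} R, ¬ FlatDimLE R n M

/-- The content ideal of a polynomial: the ideal generated by its coefficients. -/
def contentIdeal {R : Type*} [CommRing R] (f : Polynomial R) : Ideal R :=
  Ideal.span (Set.range f.coeff)

/-- A Gaussian ring: `c(fg) = c(f)c(g)` for all polynomials. -/
def IsGaussian (R : Type*) [CommRing R] : Prop :=
  ∀ f g : Polynomial R, contentIdeal (f * g) = contentIdeal f * contentIdeal g

/-- A Prüfer ring: every finitely generated regular ideal is invertible. -/
def IsPruferRing (R : Type u) [CommRing R] : Prop :=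
  ∀ I : Ideal R, I.FG → (∃ x ∈ I, x ∈ nonZeroDivisors R) →
    IsUnit (I : FractionalIdeal (nonZeroDivisors R) (FractionRing R))

/-- A quasi-projective module: every map to a quotient of `M` lifts to an endomorphism. -/
def IsQuasiProjective (R : Type u) [CommRing R] (M : Type v) [AddCommGroup M] [Module R M] : Prop :=
  ∀ (N : Submodule R M) (g : M →ₗ[R] M ⧸ N), ∃ h : M →ₗ[R] M, N.mkQ.comp h = g

/-- Osofsky's Lemma 1: in a chained ring with zero divisors, with
`I = {x | x² = 0}`, one has `I² = 0` and `x ∉ I → (0 : x) ⊆ I`. -/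
theorem stmt_0 (R : Type u) [CommRing R] (hch : IsChainedRing R)
    (hzd : HasZeroDivisors R) :
    (∀ a b : R, a ^ 2 = 0 → b ^ 2 = 0 → a * b = 0) ∧
    (∀ x : R, x ^ 2 ≠ 0 → ∀ y : R, y * x = 0 → y ^ 2 = 0) := by
  constructor
  · intro a b ha hb
    rcases hch (Ideal.span {a}) (Ideal.span {b}) with h | h
    · obtain ⟨c, rfl⟩ := Ideal.span_singleton_le_span_singleton.mp h
      calc b * c * b = c * b ^ 2 := by ring
        _ = 0 := by rw [hb, mul_zero]
    · obtain ⟨c, rfl⟩ := Ideal.span_singleton_le_span_singleton.mp h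
      calc a * (a * c) = c * a ^ 2 := by ring
        _ = 0 := by rw [ha, mul_zero]
  · intro x hx y hxy
    rcases hch (Ideal.span {x}) (Ideal.span {y}) with h | h
    · obtain ⟨c, rfl⟩ := Ideal.span_singleton_le_span_singleton.mp h
      exact absurd (by calc (y * c) ^ 2 = c * (y * (y * c)) := by ring
        _ = 0 := by rw [hxy, mul_zero]) hx
    · obtain ⟨c, rfl⟩ := Ideal.span_singleton_le_span_singleton.mp h
      calc (x * c) ^ 2 = c * (x * c * x) := by ring
        _ = 0 := by rw [hxy, mul_zero]
end

section
/- Let (R, m) be a chained ring with zero divisors such that the set of zero divisors Z(R) equals m. If 0 ≠ x ∈ m and (0 : x) = yR for some y ∈ R, then (0 : y) = xR. -/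
universe u v

/-- Osofsky's Lemma 2, first part: if `(0 : x) = yR`, then `(0 : y) = xR`. -/
theorem stmt_1 (R : Type u) [CommRing R] [IsLocalRing R] (hch : IsChainedRing R)
    (hzd : HasZeroDivisors R)
    (hZ : ∀ x : R, x ∈ IsLocalRing.maximalIdeal R ↔ ∃ y : R, y ≠ 0 ∧ x * y = 0)
    (x y : R) (hx0 : x ≠ 0) (hxm : x ∈ IsLocalRing.maximalIdeal R)
    (hann : ∀ r : R, r * x = 0 ↔ ∃ s : R, r = y * s) :
    ∀ r : R, r * y = 0 ↔ ∃ s : R, r = x * s := by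
  have hyx : y * x = 0 := (hann y).mpr ⟨1, (mul_one y).symm⟩
  intro r
  constructor
  · intro hry
    rcases hch (Ideal.span {r}) (Ideal.span {x}) with h | h
    · exact Ideal.mem_span_singleton'.mp (h (Ideal.mem_span_singleton_self r)) |>.imp
        fun s hs => by rw [← hs]; ring
    · rcases Ideal.mem_span_singleton'.mp (h (Ideal.mem_span_singleton_self x)) with ⟨s, hxs⟩
      by_cases hsu : IsUnit s
      · rcases hsu with ⟨u, rfl⟩
        refine ⟨(u⁻¹ : Rˣ), ?_⟩
        have : x * (u⁻¹ : Rˣ) = (u : R) * r * (u⁻¹ : Rˣ) := by rw [hxs]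
        rw [this, mul_comm (u : R) r, mul_assoc, Units.mul_inv, mul_one]
      · have hsm : s ∈ IsLocalRing.maximalIdeal R := hsu
        rcases (hZ s).mp hsm with ⟨z, hz0, hsz⟩
        rcases hch (Ideal.span {z}) (Ideal.span {r}) with h2 | h2
        · rcases Ideal.mem_span_singleton'.mp (h2 (Ideal.mem_span_singleton_self z)) with ⟨u, hzu⟩
          have hux : u * x = 0 := by
            rw [← hxs, show u * (s * r) = s * (u * r) by ring, hzu, hsz]
          rcases (hann u).mp hux with ⟨v, huv⟩
          exact absurd (by rw [← hzu, huv, show y * v * r = r * y * v by ring, hry, zero_mul])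
            hz0
        · rcases Ideal.mem_span_singleton'.mp (h2 (Ideal.mem_span_singleton_self r)) with ⟨w, hrw⟩
          exact absurd (by rw [← hxs, ← hrw, show s * (w * z) = w * (s * z) by ring, hsz,
            mul_zero]) hx0
  · rintro ⟨s, rfl⟩
    rw [show x * s * y = s * (y * x) by ring, hyx, mul_zero]
end

section
/- Let (R, m) be a chained ring with zero divisors such that Z(R) = m. If 0 ≠ x ∈ m and (0 : x) is a principal ideal, then R has infinite weak global dimension. -/
universe u v

/-!
Let `y` generate `(0 : x)`. In a chained local ring, comparing `(r)`, `(x)`, `(y)` pairwise shows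
that also `(0 : y) = (x)`, so `(x) ≅ R/(y)` and `(y) ≅ R/(x)`. Hence
`0 → R/(y) → R → R/(x) → 0` and its mirror image splice into an infinite periodic flat
resolution: dimension shifting reduces `fd R/(x) ≤ n + 1` to `fd R/(y) ≤ n`, and
`fd R/(x) ≤ 0` is impossible because a finitely presented flat module over a local ring is free,
while `R/(x) ≠ 0` is killed by `x ≠ 0`.
-/

open LinearMap TensorProduct

namespace Module.Flat

variable {R : Type*} [CommRing R] {M N : Type*} [AddCommGroup M] [Module R M]
  [AddCommGroup N] [Module R N]

instance prod [Flat R M] [Flat R N] : Flat R (M × N) := by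
  rw [iff_lTensor_injective']
  intro I
  have hcomm : (prodLeft R R M N R).toLinearMap ∘ₗ lTensor (M × N) I.subtype =
      (lTensor M I.subtype).prodMap (lTensor N I.subtype) ∘ₗ
        (prodLeft R R M N I).toLinearMap := by
    ext <;> simp
  have hinj : Function.Injective ((lTensor M I.subtype).prodMap (lTensor N I.subtype)) :=
    Prod.map_injective.mpr ⟨lTensor_preserves_injective_linearMap _ I.injective_subtype,
      lTensor_preserves_injective_linearMap _ I.injective_subtype⟩
  have hcomp : Function.Injective
      ((prodLeft R R M N R).toLinearMap ∘ₗ lTensor (M × N) I.subtype) := by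
    rw [hcomm, coe_comp]
    exact hinj.comp (prodLeft R R M N I).injective
  rwa [coe_comp, LinearEquiv.coe_coe, EquivLike.comp_injective] at hcomp

theorem ker_of_surjective [Flat R M] [Flat R N]
    (g : M →ₗ[R] N) (hg : Function.Surjective g) : Flat R (ker g) := by
  rw [iff_rTensor_injective']
  intro I
  have hinj : Function.Injective (rTensor M I.subtype ∘ₗ lTensor I (ker g).subtype) :=
    (rTensor_preserves_injective_linearMap _ I.injective_subtype).comp
      (lTensor_injective_of_exact_of_flat g hg _ (ker g).injective_subtype
        (exact_subtype_ker_map g) I)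
  rw [rTensor_comp_lTensor, ← lTensor_comp_rTensor, coe_comp] at hinj
  exact hinj.of_comp

end Module.Flat

namespace FlatDimLE

variable {R : Type u} [CommRing R]

theorem congr {M N : Type u} [AddCommGroup M] [Module R M] [AddCommGroup N] [Module R N]
    (e : M ≃ₗ[R] N) :
    ∀ {n : ℕ}, FlatDimLE R n (ModuleCat.of R M) → FlatDimLE R n (ModuleCat.of R N)
  | 0, h => by
    have : Module.Flat R M := h
    exact Module.Flat.of_linearEquiv e.symm
  | _ + 1, ⟨F, f, hf, hF, hK⟩ => by
    refine ⟨F, e.toLinearMap ∘ₗ f, e.surjective.comp hf, hF, ?_⟩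
    rwa [ker_comp, LinearEquiv.ker, Submodule.comap_bot]

theorem prod_of_flat {M N : Type u} [AddCommGroup M] [Module R M] [AddCommGroup N] [Module R N]
    [Module.Flat R N] : ∀ {n : ℕ}, FlatDimLE R n (ModuleCat.of R M) →
      FlatDimLE R n (ModuleCat.of R (M × N))
  | 0, h => by
    have : Module.Flat R M := h
    exact Module.Flat.prod
  | _ + 1, ⟨F, f, hf, hF, hK⟩ => by
    have : Module.Flat R F := hF
    refine ⟨ModuleCat.of R (F × N), f.prodMap id,
      Prod.map_surjective.mpr ⟨hf, fun x => ⟨x, rfl⟩⟩, Module.Flat.prod,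
      hK.congr (LinearEquiv.ofBijective ((inl R F N).restrict fun x hx => ?_) ⟨?_, ?_⟩)⟩
    · simpa using hx
    · intro x y hxy
      exact Subtype.ext (congrArg (fun z : ker (f.prodMap id) => (z : F × N).1) hxy)
    · rintro ⟨⟨a, b⟩, hab⟩
      obtain ⟨ha, rfl⟩ : f a = 0 ∧ b = 0 := by simpa using hab
      exact ⟨⟨a, ha⟩, rfl⟩

theorem ker_of_surjective {B C : Type u} [AddCommGroup B] [Module R B] [AddCommGroup C]
    [Module R C] [Module.Flat R C] (g : B →ₗ[R] C) (hg : Function.Surjective g) :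
    ∀ {n : ℕ}, FlatDimLE R n (ModuleCat.of R B) → FlatDimLE R n (ModuleCat.of R (ker g))
  | 0, h => by
    have : Module.Flat R B := h
    exact Module.Flat.ker_of_surjective g hg
  | _ + 1, ⟨F, f, hf, hF, hK⟩ => by
    have : Module.Flat R F := hF
    let f' : ker (g ∘ₗ f) →ₗ[R] ker g := f.restrict fun _ hx => hx
    have hf' : Function.Surjective f' := by
      rintro ⟨b, hb⟩
      obtain ⟨v, rfl⟩ := hf b
      exact ⟨⟨v, hb⟩, rfl⟩
    have hle : ker f ≤ ker (g ∘ₗ f) := fun v hv => by simp_all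
    refine ⟨ModuleCat.of R (ker (g ∘ₗ f)), f', hf',
      Module.Flat.ker_of_surjective _ (hg.comp hf), ?_⟩
    have hker : ker f' = (ker f).comap (ker (g ∘ₗ f)).subtype := by
      ext x
      exact Subtype.ext_iff
    rw [hker]
    exact hK.congr (Submodule.comapSubtypeEquivOfLe hle).symm

theorem ker_of_projective {P M : Type u} [AddCommGroup P] [Module R P] [Module.Projective R P]
    [AddCommGroup M] [Module R M] (p : P →ₗ[R] M) (hp : Function.Surjective p) {n : ℕ}
    (h : FlatDimLE R (n + 1) (ModuleCat.of R M)) : FlatDimLE R n (ModuleCat.of R (ker p)) := by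
  obtain ⟨F, f, hf, hF, hK⟩ := h
  have : Module.Flat R F := hF
  -- `ker f × P` maps onto `F` with kernel `≅ ker p` (a form of Schanuel's lemma).
  obtain ⟨s, hs⟩ := Module.projective_lifting_property f p hf
  have hfs (x : P) : f (s x) = p x := congr($hs x)
  let φ : ker f × P →ₗ[R] F := (ker f).subtype.coprod s
  have hφ : Function.Surjective φ := fun v => by
    obtain ⟨x, hx⟩ := hp (f v)
    exact ⟨(⟨v - s x, by simp [hfs, hx]⟩, x), by simp [φ]⟩
  have hφ0 {k : ker f} {x : P} : φ (k, x) = 0 ↔ (k : F) = -s x := add_eq_zero_iff_eq_neg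
  have hmem : ∀ z ∈ ker φ, snd R (ker f) P z ∈ ker p := fun ⟨k, x⟩ hz => by
    have hk := k.2
    rwa [mem_ker, hφ0.mp hz, map_neg, neg_eq_zero, hfs] at hk
  have hbij : Function.Bijective ((snd R (ker f) P).restrict hmem) := by
    refine ⟨fun ⟨⟨k, x⟩, hz⟩ ⟨⟨k', x'⟩, hz'⟩ h => ?_, fun ⟨x, hx⟩ => ?_⟩
    · obtain rfl : x = x' := congr($h.1)
      have : k = k' := Subtype.ext ((hφ0.mp hz).trans (hφ0.mp hz').symm)
      subst this; rfl
    · exact ⟨⟨(⟨-s x, by simp [hfs, mem_ker.mp hx]⟩, x), hφ0.mpr rfl⟩, rfl⟩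
  exact (hK.prod_of_flat.ker_of_surjective φ hφ).congr (LinearEquiv.ofBijective _ hbij)

end FlatDimLE

theorem Ideal.eq_bot_or_eq_top_of_flat_quotient {R : Type*} [CommRing R] [IsLocalRing R]
    (I : Ideal R) (hI : I.FG) [Module.Flat R (R ⧸ I)] : I = ⊥ ∨ I = ⊤ := by
  refine or_iff_not_imp_right.mpr fun hI' => ?_
  have : Nontrivial (R ⧸ I) := Ideal.Quotient.nontrivial_iff.mpr hI'
  have : Module.FinitePresentation R (R ⧸ I) :=
    Module.finitePresentation_of_surjective I.mkQ I.mkQ_surjective (by rwa [I.ker_mkQ])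
  have : Module.Free R (R ⧸ I) := Module.free_of_flat_of_isLocalRing
  rw [← Ideal.annihilator_quotient (I := I)]
  exact Module.annihilator_eq_bot.mpr inferInstance

theorem Ideal.mul_eq_zero_of_torsionOf_eq_span_singleton {R : Type*} [CommRing R] {a b : R}
    (hab : Ideal.torsionOf R R a = Ideal.span {b}) : b * a = 0 := by
  rw [← smul_eq_mul, ← Ideal.mem_torsionOf_iff, hab]
  exact Ideal.mem_span_singleton_self b

theorem IsChainedRing.dvd_or_dvd {R : Type*} [CommRing R] (h : IsChainedRing R) (a b : R) :
    a ∣ b ∨ b ∣ a := by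
  simpa only [Ideal.span_singleton_le_span_singleton] using h (Ideal.span {b}) (Ideal.span {a})

theorem IsChainedRing.torsionOf_eq_span_of_torsionOf_eq_span {R : Type*} [CommRing R]
    [IsLocalRing R] (h : IsChainedRing R) {a b : R} (ha : a ≠ 0) (hb : b ≠ 0)
    (hab : Ideal.torsionOf R R a = Ideal.span {b}) : Ideal.torsionOf R R b = Ideal.span {a} := by
  have hba := Ideal.mul_eq_zero_of_torsionOf_eq_span_singleton hab
  ext r
  rw [Ideal.mem_torsionOf_iff, Ideal.mem_span_singleton, smul_eq_mul]
  refine ⟨fun hrb => ?_, fun ⟨c, hc⟩ => by linear_combination c * hba + b * hc⟩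
  rcases h.dvd_or_dvd a r with har | ⟨t, hat⟩
  · exact har
  rcases h.dvd_or_dvd b t with ⟨c, hc⟩ | ⟨c, hbc⟩
  · exact absurd (by linear_combination hat + r * hc + c * hrb) ha
  obtain ⟨d, hcd⟩ : b ∣ c := by
    rw [← Ideal.mem_span_singleton, ← hab, Ideal.mem_torsionOf_iff, smul_eq_mul]
    linear_combination c * hat - r * hbc + hrb
  rcases IsLocalRing.isUnit_or_isUnit_one_sub_self (t * d) with htd | htd
  · exact hat ▸ ((isUnit_of_mul_isUnit_left htd).mul_right_dvd).mpr dvd_rfl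
  · refine absurd (htd.mul_left_eq_zero.mp ?_) hb
    linear_combination hbc + t * hcd

theorem not_flatDimLE_quotient_span_singleton {R : Type u} [CommRing R] [IsLocalRing R] :
    ∀ (n : ℕ) {a b : R}, a ≠ 0 → b ≠ 0 → Ideal.torsionOf R R a = Ideal.span {b} →
      Ideal.torsionOf R R b = Ideal.span {a} →
      ¬ FlatDimLE R n (ModuleCat.of R (R ⧸ Ideal.span {a}))
  | 0, a, b, ha, hb, hab, _, h => by
    have : Module.Flat R (R ⧸ Ideal.span {a}) := h
    rcases (Ideal.span {a}).eq_bot_or_eq_top_of_flat_quotient ⟨{a}, by simp⟩ with hbot | htop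
    · exact ha (Ideal.span_singleton_eq_bot.mp hbot)
    · exact hb <| (Ideal.span_singleton_eq_top.mp htop).mul_left_eq_zero.mp <|
        Ideal.mul_eq_zero_of_torsionOf_eq_span_singleton hab
  | n + 1, a, b, ha, hb, hab, hba, h =>
    not_flatDimLE_quotient_span_singleton n hb ha hba hab <|
      (FlatDimLE.ker_of_projective _ (Submodule.mkQ_surjective _) h).congr <|
        LinearEquiv.ofEq _ _ (Submodule.ker_mkQ _) ≪≫ₗ
          (Ideal.quotTorsionOfEquivSpanSingleton R R a).symm ≪≫ₗ
            Submodule.quotEquivOfEq _ _ hab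

theorem stmt_2_general (R : Type u) [CommRing R] [IsLocalRing R] (hch : IsChainedRing R)
    (hZ : ∀ x : R, x ∈ IsLocalRing.maximalIdeal R ↔ ∃ y : R, y ≠ 0 ∧ x * y = 0)
    (x : R) (hx0 : x ≠ 0) (hxm : x ∈ IsLocalRing.maximalIdeal R)
    (hprin : ∃ y : R, ∀ r : R, r * x = 0 ↔ ∃ s : R, r = y * s) :
    HasInfiniteWeakGlobalDimension R := by
  obtain ⟨y, hy⟩ := hprin
  have hxy : Ideal.torsionOf R R x = Ideal.span {y} := by
    ext r
    rw [Ideal.mem_torsionOf_iff, smul_eq_mul, hy, Ideal.mem_span_singleton']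
    simp only [eq_comm, mul_comm]
  have hy0 : y ≠ 0 := by
    obtain ⟨z, hz0, hxz⟩ := (hZ x).mp hxm
    obtain ⟨s, rfl⟩ := (hy z).mp (by rwa [mul_comm])
    exact left_ne_zero_of_mul hz0
  have hyx := hch.torsionOf_eq_span_of_torsionOf_eq_span hx0 hy0 hxy
  exact fun n => ⟨_, not_flatDimLE_quotient_span_singleton n hx0 hy0 hxy hyx⟩

/-- Osofsky's Lemma 2: if `(0 : x)` is principal for some nonzero `x ∈ m`,
then `R` has infinite weak global dimension. -/
theorem stmt_2 (R : Type u) [CommRing R] [IsLocalRing R] (hch : IsChainedRing R)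
    (hzd : HasZeroDivisors R)
    (hZ : ∀ x : R, x ∈ IsLocalRing.maximalIdeal R ↔ ∃ y : R, y ≠ 0 ∧ x * y = 0)
    (x : R) (hx0 : x ≠ 0) (hxm : x ∈ IsLocalRing.maximalIdeal R)
    (hprin : ∃ y : R, ∀ r : R, r * x = 0 ↔ ∃ s : R, r = y * s) :
    HasInfiniteWeakGlobalDimension R :=
  stmt_2_general R hch hZ x hx0 hxm hprin
end

section
/- Let (R, m) be a chained ring with zero divisors such that Z(R) = m. If every element of R squares to zero whenever it lies in m (i.e., m = {x | x² = 0}), then m is a principal ideal, and moreover (0 : a) = aR for any nonzero a ∈ m. -/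
universe u v

/-- Osofsky's Corollary: if `m = {x | x² = 0}`, then `m` is principal and
`(0 : a) = aR` for every nonzero `a ∈ m`. -/
theorem stmt_3 (R : Type u) [CommRing R] [IsLocalRing R] (hch : IsChainedRing R)
    (hzd : HasZeroDivisors R)
    (hZ : ∀ x : R, x ∈ IsLocalRing.maximalIdeal R ↔ ∃ y : R, y ≠ 0 ∧ x * y = 0)
    (hI : ∀ x : R, x ∈ IsLocalRing.maximalIdeal R ↔ x ^ 2 = 0) :
    (∃ a : R, IsLocalRing.maximalIdeal R = Ideal.span {a}) ∧
    (∀ a : R, a ∈ IsLocalRing.maximalIdeal R → a ≠ 0 →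
      ∀ r : R, r * a = 0 ↔ ∃ s : R, r = a * s) := by
  -- m² = 0
  have hmul : ∀ x y : R, x ∈ IsLocalRing.maximalIdeal R → y ∈ IsLocalRing.maximalIdeal R →
      x * y = 0 := by
    intro x y hx hy
    rcases hch (Ideal.span {x}) (Ideal.span {y}) with h | h
    · obtain ⟨c, hc⟩ := Ideal.mem_span_singleton.mp (h (Ideal.mem_span_singleton_self x))
      have hy2 := (hI y).mp hy
      rw [hc]
      calc y * c * y = y ^ 2 * c := by ring
        _ = 0 := by rw [hy2, zero_mul]
    · obtain ⟨c, hc⟩ := Ideal.mem_span_singleton.mp (h (Ideal.mem_span_singleton_self y))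
      have hx2 := (hI x).mp hx
      rw [hc]
      calc x * (x * c) = x ^ 2 * c := by ring
        _ = 0 := by rw [hx2, zero_mul]
  have hann : ∀ a : R, a ∈ IsLocalRing.maximalIdeal R → a ≠ 0 →
      ∀ r : R, r * a = 0 → ∃ s : R, r = a * s := by
    intro a ha ha0 r hra
    by_cases hr : r ∈ Ideal.span ({a} : Set R)
    · exact Ideal.mem_span_singleton.mp hr
    · have hle : Ideal.span ({a} : Set R) ≤ Ideal.span {r} := by
        rcases hch (Ideal.span {r}) (Ideal.span {a}) with h | h
        · exact absurd (h (Ideal.mem_span_singleton_self r)) hr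
        · exact h
      obtain ⟨t, ht⟩ := Ideal.mem_span_singleton.mp (hle (Ideal.mem_span_singleton_self a))
      by_cases htu : IsUnit t
      · obtain ⟨u, hu⟩ := htu
        refine ⟨(↑u⁻¹ : Rˣ), ?_⟩
        have : a * (↑u⁻¹ : Rˣ) = r * t * (↑u⁻¹ : Rˣ) := by rw [← ht]
        rw [this, ← hu, mul_assoc, Units.mul_inv, mul_one]
      · have hrm : r ∈ IsLocalRing.maximalIdeal R := (hZ r).mpr ⟨a, ha0, hra⟩
        have htm : t ∈ IsLocalRing.maximalIdeal R := htu
        exact absurd (ht.trans (hmul r t hrm htm)) ha0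
  obtain ⟨a, b, ha0, hb0, hab⟩ := hzd
  have ham : a ∈ IsLocalRing.maximalIdeal R := (hZ a).mpr ⟨b, hb0, hab⟩
  constructor
  · refine ⟨a, le_antisymm ?_ ?_⟩
    · intro x hx
      obtain ⟨s, hs⟩ := hann a ham ha0 x (hmul x a hx ham)
      exact Ideal.mem_span_singleton.mpr ⟨s, hs⟩
    · rw [Ideal.span_le, Set.singleton_subset_iff]; exact ham
  · intro c hc hc0 r
    constructor
    · exact hann c hc hc0 r
    · rintro ⟨s, rfl⟩
      have hc2 := (hI c).mp hc
      calc c * s * c = c ^ 2 * s := by ring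
        _ = 0 := by rw [hc2, zero_mul]
end

section
/- Let R be a local Gaussian ring and I = (a₁, ..., aₙ) a finitely generated ideal of R. Then I² = (aᵢ²) for some i ∈ {1, ..., n}. -/
universe u v

/-!
For two generators `a, b`: the Gaussian identity for `aX + b` and `aX - b` gives
`(a, b)² = (a², b²)`, so `ab = r a² + s b²`. Put `ν = l r + m s` with `l m - ν²` a unit (possible in
a local ring). Then `g = (νa - l b)X + (ma - νb)` still has content `(a, b)`, and the coefficients of
`(aX + b) g` are `s c, c, r c` with `c = m a² - l b²`; hence `(a², b²) = (a, b)² = (c)` is principal.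
In a local ring, a principal ideal `(x, y)` equals `(x)` or `(y)`.

For `n` generators the ideals `(aᵢ²)` are then totally ordered; if `(aᵢ²)` is the largest, every
product `aⱼ aₖ` lies in `(aⱼ, aₖ)² ⊆ (aᵢ²)`.
-/

open scoped Polynomial
open Polynomial (C X)
open Ideal

section

variable {R : Type*} [CommRing R]

theorem contentIdeal_eq_span_coeff_image {p : R[X]} {n : ℕ} (hp : p.natDegree < n) :
    contentIdeal p = span (p.coeff '' ↑(Finset.range n)) := by
  refine le_antisymm (span_le.2 ?_) (span_mono (Set.image_subset_range _ _))
  rintro _ ⟨k, rfl⟩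
  by_cases hk : k < n
  · exact subset_span ⟨k, Finset.mem_range.2 hk, rfl⟩
  · rw [Polynomial.coeff_eq_zero_of_natDegree_lt (hp.trans_le (not_lt.1 hk))]
    exact zero_mem _

theorem contentIdeal_linear (a b : R) : contentIdeal (C a * X + C b) = span {a, b} := by
  rw [contentIdeal_eq_span_coeff_image (Polynomial.natDegree_linear_le.trans_lt one_lt_two),
    show Finset.range 2 = {1, 0} by decide]
  simp [Polynomial.coeff_C, Polynomial.coeff_X, Set.image_insert_eq]

theorem contentIdeal_quadratic (a b c : R) :
    contentIdeal (C a * X ^ 2 + C b * X + C c) = span {a, b, c} := by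
  rw [contentIdeal_eq_span_coeff_image
    (Polynomial.natDegree_quadratic_le.trans_lt (Nat.lt_succ_self 2)),
    show Finset.range 3 = {2, 1, 0} by decide]
  simp [Polynomial.coeff_X, Polynomial.coeff_C, Set.image_insert_eq]

theorem IsGaussian.span_pair_mul_span_pair (hG : IsGaussian R) (a b u v : R) :
    span {a, b} * span {u, v} = span {a * u, a * v + b * u, b * v} := by
  have hfg : (C a * X + C b) * (C u * X + C v) =
      C (a * u) * X ^ 2 + C (a * v + b * u) * X + C (b * v) := by
    simp only [map_mul, map_add]; ring
  rw [← contentIdeal_linear, ← contentIdeal_linear, ← hG, hfg, contentIdeal_quadratic]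

theorem Ideal.span_pair_linear_eq_of_isUnit {a b α β γ δ : R} (h : IsUnit (α * δ - β * γ)) :
    span {α * a + β * b, γ * a + δ * b} = span {a, b} := by
  obtain ⟨e, he⟩ := h.exists_right_inv
  refine le_antisymm (span_le.2 ?_) (span_le.2 ?_) <;>
    simp only [Set.insert_subset_iff, Set.singleton_subset_iff, SetLike.mem_coe, mem_span_pair]
  · exact ⟨⟨α, β, rfl⟩, ⟨γ, δ, rfl⟩⟩
  · exact ⟨⟨e * δ, -(e * β), by linear_combination a * he⟩,
      ⟨-(e * γ), e * α, by linear_combination b * he⟩⟩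

theorem IsLocalRing.dvd_or_dvd_of_isPrincipal_span_pair [IsLocalRing R] {x y : R}
    (h : (span {x, y}).IsPrincipal) : x ∣ y ∨ y ∣ x := by
  obtain ⟨c, hc⟩ := h.principal
  have hmem : ∀ z ∈ span {x, y}, c ∣ z := fun z hz => mem_span_singleton.1 (by rwa [hc] at hz)
  obtain ⟨p, rfl⟩ := hmem x (subset_span (by simp))
  obtain ⟨q, rfl⟩ := hmem y (subset_span (by simp))
  obtain ⟨u, v, huv⟩ :=
    mem_span_pair.1 (hc ▸ mem_span_singleton_self c : c ∈ span {c * p, c * q})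
  rcases IsLocalRing.isUnit_or_isUnit_one_sub_self (u * p + v * q) with hunit | hunit
  · rcases IsLocalRing.isUnit_or_isUnit_of_isUnit_add hunit with hp | hq
    · exact .inl ((isUnit_of_mul_isUnit_right hp).mul_right_dvd.2 (dvd_mul_right c q))
    · exact .inr ((isUnit_of_mul_isUnit_right hq).mul_right_dvd.2 (dvd_mul_right c p))
  · have hc0 : c = 0 := hunit.mul_left_eq_zero.1 (by linear_combination -huv)
    simp [hc0]

theorem Ideal.mul_mem_span_pair_sq (x y : R) : x * y ∈ span {x, y} ^ 2 :=
  sq (span {x, y}) ▸ mul_mem_mul (subset_span (by simp)) (subset_span (by simp))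

theorem IsLocalRing.exists_isUnit_mul_sub_sq [IsLocalRing R] (r s : R) :
    ∃ l m : R, IsUnit (l * m - (l * r + m * s) ^ 2) := by
  by_cases hr : IsUnit r
  · exact ⟨1, 0, by simpa using (hr.pow 2).neg⟩
  by_cases hs : IsUnit s
  · exact ⟨0, 1, by simpa using (hs.pow 2).neg⟩
  have hsq : (r + s) ^ 2 ∈ IsLocalRing.maximalIdeal R :=
    (IsLocalRing.maximalIdeal R).pow_mem_of_mem (add_mem ((IsLocalRing.mem_maximalIdeal r).2 hr)
      ((IsLocalRing.mem_maximalIdeal s).2 hs)) 2 two_pos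
  exact ⟨1, 1, by simpa using IsLocalRing.isUnit_one_sub_self_of_mem_nonunits _ hsq⟩

theorem IsGaussian.span_pair_sq_eq [IsLocalRing R] (hG : IsGaussian R) (a b : R) :
    span {a, b} ^ 2 = span {a ^ 2} ∨ span {a, b} ^ 2 = span {b ^ 2} := by
  have hsq : span {a, b} ^ 2 = span {a ^ 2, b ^ 2} := by
    have h := hG.span_pair_mul_span_pair a b a (-b)
    rw [span_pair_neg, show a * -b + b * a = 0 by ring, show b * -b = -b ^ 2 by ring, ← sq a] at h
    rw [sq, h, span_insert, span_insert_zero, span_singleton_neg, ← span_insert]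
  obtain ⟨r, s, hrs⟩ := mem_span_pair.1 (hsq ▸ mul_mem_span_pair_sq a b)
  obtain ⟨l, m, hunit⟩ := IsLocalRing.exists_isUnit_mul_sub_sq r s
  set ν := l * r + m * s with hν
  set c := m * a ^ 2 - l * b ^ 2 with hc_def
  have hc : span {a, b} ^ 2 = span {c} := by
    have h := hG.span_pair_mul_span_pair a b (ν * a + -l * b) (m * a + -ν * b)
    rw [span_pair_linear_eq_of_isUnit (by convert hunit using 1; ring),
      show a * (ν * a + -l * b) = s * c by linear_combination l * hrs + a ^ 2 * hν - s * hc_def,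
      show a * (m * a + -ν * b) + b * (ν * a + -l * b) = c by linear_combination -hc_def,
      show b * (m * a + -ν * b) = r * c by
        linear_combination -m * hrs - b ^ 2 * hν - r * hc_def] at h
    rw [sq, h, span_insert, span_pair_eq_span_left_iff_dvd.2 (dvd_mul_left c r),
      sup_eq_right.2 (span_singleton_le_span_singleton.2 (dvd_mul_left c s))]
  rcases IsLocalRing.dvd_or_dvd_of_isPrincipal_span_pair ⟨c, (hsq.symm.trans hc :)⟩ with h | h
  · exact .inl (hsq.trans (span_pair_eq_span_left_iff_dvd.2 h))
  · exact .inr (hsq.trans (span_pair_eq_span_right_iff_dvd.2 h))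

theorem Ideal.exists_span_range_sq_eq_span_sq
    (hpair : ∀ x y : R, span {x, y} ^ 2 = span {x ^ 2} ∨ span {x, y} ^ 2 = span {y ^ 2})
    {ι : Type*} [Fintype ι] [Nonempty ι] (a : ι → R) :
    ∃ i, span (Set.range a) ^ 2 = span {a i ^ 2} := by
  have htotal :
      ∀ j k, span {a j ^ 2} ≤ span {a k ^ 2} ∨ span {a k ^ 2} ≤ span {a j ^ 2} := by
    intro j k
    rcases hpair (a j) (a k) with h | h <;>
      rw [span_singleton_le_iff_mem, span_singleton_le_iff_mem, ← h]
    · exact .inr (pow_mem_pow (subset_span (by simp)) 2)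
    · exact .inl (pow_mem_pow (subset_span (by simp)) 2)
  obtain ⟨i, -, hi⟩ :=
    Finset.univ.exists_maximalFor (fun j => span {a j ^ 2}) Finset.univ_nonempty
  have hmax : ∀ j, span {a j ^ 2} ≤ span {a i ^ 2} :=
    fun j => (htotal j i).elim id (hi (Finset.mem_univ j))
  refine ⟨i, le_antisymm ?_ ((span_singleton_le_iff_mem _).2
    (pow_mem_pow (subset_span (Set.mem_range_self i)) 2))⟩
  rw [sq, span_mul_span', span_le]
  rintro _ ⟨_, ⟨j, rfl⟩, _, ⟨k, rfl⟩, rfl⟩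
  rcases hpair (a j) (a k) with h | h
  · exact hmax j (h ▸ mul_mem_span_pair_sq _ _)
  · exact hmax k (h ▸ mul_mem_span_pair_sq _ _)

end

/-- In a local Gaussian ring, `(a₁, …, aₙ)² = (aᵢ²)` for some `i`. -/
theorem stmt_6 (R : Type u) [CommRing R] [IsLocalRing R] (hG : IsGaussian R)
    (n : ℕ) (hn : 0 < n) (a : Fin n → R) :
    ∃ i : Fin n, (Ideal.span (Set.range a)) ^ 2 = Ideal.span {a i ^ 2} :=
  have : Nonempty (Fin n) := ⟨⟨0, hn⟩⟩
  exists_span_range_sq_eq_span_sq hG.span_pair_sq_eq a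
end

section
/- Let (R, m) be a commutative local ring whose maximal ideal m is nonzero and nilpotent. Then the flat dimension of m is infinite, and hence the weak global dimension of R is infinite. -/
universe u v

/-!
Write `𝔪` for the maximal ideal and `k = R/𝔪`. Since `𝔪` is nilpotent, Nakayama's lemma holds
for all modules, and `𝔪` has a nonzero annihilator `t`. Flat modules are free: lifts of a
`k`-basis of `k ⊗ M` are independent by flatness and span by Nakayama.

For flat `M` the equational criterion gives `{x | t • x = 0} = 𝔪M`. In `M = 𝔪` every element is
killed by `t`, so `𝔪 = 𝔪 • 𝔪` and `𝔪 = 0`; hence `𝔪` is not flat. On the other hand, if `K ⊆ F`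
are both flat, a basis of the free module `K` stays independent modulo `𝔪F` (multiplying a
relation with a unit coefficient by `t` gives a relation in `K`), so it extends to a basis of `F`
and `F/K` is free. By induction every module of finite flat dimension is flat, so `fd 𝔪 = ∞`.
-/

open Module IsLocalRing

section Nilpotent

variable {R M : Type*} [CommRing R] [AddCommGroup M] [Module R M]

theorem Submodule.eq_top_of_sup_smul_top_eq_top_of_isNilpotent {I : Ideal R} (hI : IsNilpotent I)
    {N : Submodule R M} (h : N ⊔ I • ⊤ = ⊤) : N = ⊤ := by
  obtain ⟨n, hn⟩ := hI
  have key : ∀ k : ℕ, N ⊔ I ^ k • ⊤ = ⊤ := by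
    intro k
    induction k with
    | zero => simp
    | succ k ih =>
      refine top_unique ?_
      calc ⊤ = N ⊔ I ^ k • (N ⊔ I • ⊤) := by rw [h, ih]
        _ ≤ N ⊔ I ^ (k + 1) • ⊤ := by
          rw [Submodule.smul_sup, ← sup_assoc, pow_succ, Submodule.mul_smul]
          exact sup_le_sup_right (sup_le le_rfl Submodule.smul_le_right) _
  simpa [hn] using key n

theorem Ideal.annihilator_ne_bot_of_isNilpotent [Nontrivial R] {I : Ideal R} (hI : IsNilpotent I) :
    I.annihilator ≠ ⊥ := by
  classical
  have hn : I ^ Nat.find hI = ⊥ := Nat.find_spec hI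
  have hpos : Nat.find hI ≠ 0 := fun h ↦ by simp [h] at hn
  obtain ⟨n, hn'⟩ : ∃ n, Nat.find hI = n + 1 := Nat.exists_eq_succ_of_ne_zero hpos
  have hpow : I ^ n ≠ ⊥ := Nat.find_min hI (by omega)
  refine ne_bot_of_le_ne_bot hpow fun t ht ↦ Submodule.mem_annihilator.mpr fun r hr ↦ ?_
  have : t * r ∈ I ^ (n + 1) := pow_succ I n ▸ Ideal.mul_mem_mul ht hr
  rwa [← hn', hn, Ideal.mem_bot] at this

theorem Submodule.smul_eq_zero_of_mem_annihilator_of_mem_smul_top {I : Ideal R} {t : R}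
    (ht : t ∈ I.annihilator) {y : M} (hy : y ∈ I • (⊤ : Submodule R M)) : t • y = 0 := by
  refine Submodule.smul_induction_on hy (fun r hr x _ ↦ ?_) fun x y hx hy ↦ ?_
  · rw [smul_smul, ← smul_eq_mul, Submodule.mem_annihilator.mp ht r hr, zero_smul]
  · rw [smul_add, hx, hy, add_zero]

end Nilpotent

theorem Module.Basis.sumExtend_apply_inl {K V ι : Type*} [DivisionRing K] [AddCommGroup V]
    [Module K V] {v : ι → V} (hv : LinearIndependent K v) (i : ι) :
    Basis.sumExtend hv (Sum.inl i) = v i := by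
  simp only [Basis.sumExtend, Basis.reindex_apply]
  erw [Basis.extend_apply_self]
  rfl

namespace IsLocalRing

variable {R : Type u} {M : Type v} [CommRing R] [IsLocalRing R] [AddCommGroup M] [Module R M]

local notation "k" => ResidueField R
local notation "𝔪" => maximalIdeal R

theorem mem_maximalIdeal_smul_top_of_smul_eq_zero [Flat R M] {t : R} (ht : t ≠ 0) {x : M}
    (hx : t • x = 0) : x ∈ 𝔪 • (⊤ : Submodule R M) := by
  obtain ⟨κ, a, y, hxy, ha⟩ := Flat.isTrivialRelation_of_sum_smul_eq_zero
    (f := fun _ : Unit ↦ t) (x := fun _ ↦ x) (by simpa using hx)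
  rw [show x = _ from hxy ()]
  refine Submodule.sum_mem _ fun j _ ↦ Submodule.smul_mem_smul ?_ trivial
  by_contra hj
  exact ht ((notMem_maximalIdeal.mp hj).mul_left_eq_zero.mp (by simpa using ha j))

theorem not_flat_maximalIdeal (hnil : IsNilpotent 𝔪) (hm : 𝔪 ≠ ⊥) : ¬ Flat R 𝔪 := by
  intro hflat
  obtain ⟨t, ht, ht0⟩ := Submodule.exists_mem_ne_zero_of_ne_bot
    (Ideal.annihilator_ne_bot_of_isNilpotent hnil)
  have hsmul : (⊥ : Submodule R 𝔪) ⊔ 𝔪 • ⊤ = ⊤ := by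
    refine eq_top_iff.mpr fun x _ ↦ ?_
    rw [bot_sup_eq]
    exact mem_maximalIdeal_smul_top_of_smul_eq_zero ht0
      (Subtype.ext (Submodule.mem_annihilator.mp ht x x.2))
  have hbot := Submodule.eq_top_of_sup_smul_top_eq_top_of_isNilpotent hnil hsmul
  refine hm ((Submodule.eq_bot_iff _).mpr fun x hx ↦ ?_)
  have : (⟨x, hx⟩ : 𝔪) ∈ (⊥ : Submodule R 𝔪) := hbot ▸ trivial
  simpa using this

theorem ker_tensorProductMk_residueField :
    LinearMap.ker (TensorProduct.mk R k M 1) = 𝔪 • ⊤ :=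
  LinearMap.ker_tensorProductMk M

theorem linearIndependent_tensorProductMk_of_sum_smul_mem_smul_top {ι : Type*} {v : ι → M}
    (h : ∀ (s : Finset ι) (c : ι → R), ∑ i ∈ s, c i • v i ∈ 𝔪 • (⊤ : Submodule R M) →
      ∀ i ∈ s, c i ∈ 𝔪) :
    LinearIndependent k (TensorProduct.mk R k M 1 ∘ v) := by
  rw [linearIndependent_iff']
  intro s g hg i hi
  choose c hc using fun i ↦ residue_surjective (g i)
  have hmk : TensorProduct.mk R k M 1 (∑ i ∈ s, c i • v i) = 0 := by
    rw [map_sum, ← hg]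
    refine Finset.sum_congr rfl fun j _ ↦ ?_
    rw [map_smul, ← hc j, ← ResidueField.algebraMap_eq, algebraMap_smul]
    rfl
  rw [← hc i, residue_eq_zero_iff]
  exact h s c (ker_tensorProductMk_residueField.le (LinearMap.mem_ker.mpr hmk)) i hi

theorem linearIndependent_tensorProductMk_of_linearIndependent
    (hsoc : Submodule.annihilator 𝔪 ≠ ⊥) {ι : Type*} {v : ι → M} (hv : LinearIndependent R v) :
    LinearIndependent k (TensorProduct.mk R k M 1 ∘ v) := by
  obtain ⟨t, ht, ht0⟩ := Submodule.exists_mem_ne_zero_of_ne_bot hsoc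
  refine linearIndependent_tensorProductMk_of_sum_smul_mem_smul_top fun s c hc i hi ↦ ?_
  have hkill : ∑ j ∈ s, (t * c j) • v j = 0 := by
    simp_rw [mul_smul, ← Finset.smul_sum]
    exact Submodule.smul_eq_zero_of_mem_annihilator_of_mem_smul_top ht hc
  by_contra hci
  exact ht0 ((notMem_maximalIdeal.mp hci).mul_left_eq_zero.mp
    (linearIndependent_iff'.mp hv s _ hkill i hi))

theorem exists_basis_sum_inl_eq (hnil : IsNilpotent 𝔪) [Flat R M] {ι : Type*} {v : ι → M}
    (hv : LinearIndependent k (TensorProduct.mk R k M 1 ∘ v)) :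
    ∃ (κ : Type (max u v)) (b : Basis (ι ⊕ κ) R M), b ∘ Sum.inl = v := by
  let B := Basis.sumExtend hv
  choose w hw using fun j ↦ TensorProduct.mk_surjective R M k residue_surjective (B (Sum.inr j))
  have hB : TensorProduct.mk R k M 1 ∘ Sum.elim v w = B := by
    ext (i | j)
    · exact (Basis.sumExtend_apply_inl hv i).symm
    · exact hw j
  have hspan : Submodule.span R (Set.range (Sum.elim v w)) ⊔ 𝔪 • ⊤ = ⊤ := by
    rw [← ker_tensorProductMk_residueField, ← Submodule.comap_map_eq, Submodule.map_span,
      ← Set.range_comp, hB, ← Submodule.restrictScalars_span R k residue_surjective, B.span_eq,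
      Submodule.restrictScalars_top, Submodule.comap_top]
  have hli : LinearIndependent R (Sum.elim v w) :=
    linearIndependent_of_flat _ (by rw [hB]; exact B.linearIndependent)
  have htop := (Submodule.eq_top_of_sup_smul_top_eq_top_of_isNilpotent hnil hspan).ge
  exact ⟨_, Basis.mk hli htop, by simp⟩

theorem free_of_flat (hnil : IsNilpotent 𝔪) [Flat R M] : Free R M := by
  obtain ⟨κ, b, -⟩ := exists_basis_sum_inl_eq hnil (v := (Empty.elim : Empty → M))
    (linearIndependent_empty_type)
  exact .of_basis (b.reindex (Equiv.emptySum Empty κ))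

theorem flat_quotient_of_flat (hnil : IsNilpotent 𝔪) [Flat R M] (N : Submodule R M) [Flat R N] :
    Flat R (M ⧸ N) := by
  have := free_of_flat hnil (M := N)
  let u := Free.chooseBasis R N
  have hu : LinearIndependent R (N.subtype ∘ u) :=
    u.linearIndependent.map' _ (Submodule.ker_subtype N)
  obtain ⟨κ, b, hb⟩ := exists_basis_sum_inl_eq hnil
    (linearIndependent_tensorProductMk_of_linearIndependent
      (Ideal.annihilator_ne_bot_of_isNilpotent hnil) hu)
  have hN : Submodule.span R (b '' Set.range Sum.inl) = N := by
    rw [← Set.range_comp, hb, Set.range_comp, ← Submodule.map_span, u.span_eq, Submodule.map_top,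
      Submodule.range_subtype]
  have hcompl := b.linearIndependent.isCompl_span_image b.span_eq Set.isCompl_range_inl_range_inr
  rw [hN, ← Set.range_comp] at hcompl
  have : Free R (Submodule.span R (Set.range (b ∘ Sum.inr))) :=
    .of_basis (.span (b.linearIndependent.comp _ Sum.inr_injective))
  exact .of_linearEquiv (Submodule.quotientEquivOfIsCompl _ _ hcompl)

end IsLocalRing

section FlatDimension

variable {R : Type u} [CommRing R]

theorem flatDim_eq_top_iff {M : ModuleCat.{u} R} : flatDim R M = ⊤ ↔ ∀ k, ¬ FlatDimLE R k M := by
  refine ⟨fun h k hk ↦ ?_, fun h ↦ sInf_eq_top.mpr ?_⟩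
  · exact ENat.natCast_ne_top k (top_le_iff.mp (h ▸ sInf_le ⟨k, rfl, hk⟩))
  · rintro _ ⟨k, rfl, hk⟩
    exact absurd hk (h k)

theorem IsLocalRing.flat_of_flatDimLE [IsLocalRing R] (hnil : IsNilpotent (maximalIdeal R))
    {k : ℕ} {M : ModuleCat.{u} R} (h : FlatDimLE R k M) : Flat R M := by
  induction k generalizing M with
  | zero => exact h
  | succ k ih =>
    obtain ⟨F, f, hf, hF, hker⟩ := h
    have := ih hker
    have := flat_quotient_of_flat hnil (LinearMap.ker f)
    exact .of_linearEquiv (f.quotKerEquivOfSurjective hf).symm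

end FlatDimension

/-- A local ring with nonzero nilpotent maximal ideal has `fd(m) = ∞` and hence
infinite weak global dimension. -/
theorem stmt_12 (R : Type u) [CommRing R] [IsLocalRing R]
    (hm : IsLocalRing.maximalIdeal R ≠ ⊥)
    (hnil : ∃ n : ℕ, 0 < n ∧ IsLocalRing.maximalIdeal R ^ n = ⊥) :
    flatDim R (ModuleCat.of R ↥(IsLocalRing.maximalIdeal R)) = ⊤ ∧
      HasInfiniteWeakGlobalDimension R := by
  obtain ⟨n, -, hn⟩ := hnil
  have hnil : IsNilpotent (maximalIdeal R) := ⟨n, hn⟩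
  have h : ∀ k, ¬ FlatDimLE R k (ModuleCat.of R (maximalIdeal R)) := fun _ hk ↦
    not_flat_maximalIdeal hnil hm (flat_of_flatDimLE hnil hk)
  exact ⟨flatDim_eq_top_iff.mpr h, fun k ↦ ⟨_, h k⟩⟩
end

section
/- Let K be a field, E a nonzero K-vector space, and R = K ⋉ E the trivial ring extension (idealization) of K by E. Then the weak global dimension of R is infinite. -/
/-! Let `𝔪 = 0 ⋉ E`, the maximal ideal of `R = K ⋉ E`, so `𝔪² = 0`. Call a module `P` *bad* if
some `x ∈ P` satisfies `𝔪 x = 0` and `x ∉ 𝔪 P`. Pick `e ∈ E` and a functional `l` with `l e = 1`.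
For a flat module `F`, `𝔪 ⊗ F ≅ 𝔪 F`, and composing with `l ⊗ (F → F/𝔪F)` shows that
`(0, e) z ∈ 𝔪 N` forces `z ∈ N + 𝔪 F`. With `N = 0` this says that a bad module is not flat.
If `F ↠ P` with `F` flat and `P` bad via `x`, lift `x` to `z`; then `(0, e) z` makes the kernel
bad. Since `R/𝔪` is bad, none of its syzygies is flat, so its flat dimension is infinite. -/

universe u v

open TensorProduct

def ExistsAnnihilatedNotMemSmulTop {A : Type*} [CommRing A] (I : Ideal A) (P : Type*)
    [AddCommGroup P] [Module A P] : Prop :=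
  ∃ x : P, (∀ r ∈ I, r • x = 0) ∧ x ∉ I • (⊤ : Submodule A P)

theorem existsAnnihilatedNotMemSmulTop_quotient {A : Type*} [CommRing A] {I : Ideal A}
    (hI : I ≠ ⊤) : ExistsAnnihilatedNotMemSmulTop I (A ⧸ I) := by
  have : Nontrivial (A ⧸ I) := Ideal.Quotient.nontrivial_iff.mpr hI
  have hsmul : I • (⊤ : Submodule A (A ⧸ I)) = ⊥ := by
    refine eq_bot_iff.mpr (Submodule.smul_le.mpr fun r hr y _ ↦ ?_)
    obtain ⟨y, rfl⟩ := Ideal.Quotient.mk_surjective y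
    simpa [Algebra.smul_def, Ideal.Quotient.eq_zero_iff_mem, ← map_mul] using I.mul_mem_right y hr
  refine ⟨1, fun r hr ↦ ?_, by simp [hsmul]⟩
  simpa [Algebra.smul_def, Ideal.Quotient.eq_zero_iff_mem] using hr

namespace TrivSqZeroExt

section CommRing

variable {R M : Type*} [CommRing R] [AddCommGroup M] [Module R M] [Module Rᵐᵒᵖ M]
  [IsCentralScalar R M]

theorem mem_kerIdeal {x : TrivSqZeroExt R M} : x ∈ kerIdeal R M ↔ x.fst = 0 := Iff.rfl

theorem inr_mem_kerIdeal (m : M) : inr m ∈ kerIdeal R M := fst_inr R m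

theorem mul_eq_zero_of_mem_kerIdeal {x y : TrivSqZeroExt R M} (hx : x ∈ kerIdeal R M)
    (hy : y ∈ kerIdeal R M) : x * y = 0 := by
  have hxy := Ideal.mul_mem_mul hx hy
  rwa [← pow_two, kerIdeal_sq, Ideal.mem_bot] at hxy

theorem mk_kerIdeal_eq_mk_inl_fst (x : TrivSqZeroExt R M) :
    Ideal.Quotient.mk (kerIdeal R M) x = Ideal.Quotient.mk (kerIdeal R M) (inl x.fst) :=
  Ideal.Quotient.eq.mpr (by simp [mem_kerIdeal])

theorem smul_mk_inl (c : TrivSqZeroExt R M) (r : R) :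
    c • Ideal.Quotient.mk (kerIdeal R M) (inl r) = Ideal.Quotient.mk _ (inl (c.fst * r)) := by
  refine (Submodule.Quotient.mk_smul (kerIdeal R M) c (inl r)).symm.trans ?_
  rw [smul_eq_mul, Ideal.Quotient.mk_eq_mk, map_mul, mk_kerIdeal_eq_mk_inl_fst c, ← map_mul,
    ← inl_mul]

def kerIdealToQuotient (l : M →ₗ[R] R) :
    kerIdeal R M →ₗ[TrivSqZeroExt R M] TrivSqZeroExt R M ⧸ kerIdeal R M where
  toFun x := Ideal.Quotient.mk _ (inl (l x.1.snd))
  map_add' x y := by simp [inl_add]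
  map_smul' c x := by
    have hx : x.1 = inr x.1.snd := (mem_kerIdeal_iff_inr _ _ _).mp x.2
    simp only [Submodule.coe_smul, smul_eq_mul, RingHom.id_apply]
    rw [hx]
    simp [snd_mul, smul_mk_inl]

@[simp]
theorem kerIdealToQuotient_apply (l : M →ₗ[R] R) (x : kerIdeal R M) :
    kerIdealToQuotient l x = Ideal.Quotient.mk _ (inl (l x.1.snd)) := rfl

theorem mem_sup_smul_top_of_inr_smul_mem {F : Type*} [AddCommGroup F]
    [Module (TrivSqZeroExt R M) F] [Module.Flat (TrivSqZeroExt R M) F]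
    {N : Submodule (TrivSqZeroExt R M) F} {l : M →ₗ[R] R} {e : M} (hl : l e = 1) {z : F}
    (hz : (inr e : TrivSqZeroExt R M) • z ∈ kerIdeal R M • N) : z ∈ N ⊔ kerIdeal R M • ⊤ := by
  -- `θ : I ⊗ F → F` is injective by flatness, so `inr e ⊗ z` comes from `I ⊗ N`; the map `μ`
  -- sends it to the class of `z` modulo `I • F` and sends `I ⊗ N` into the image of `N`.
  set I := kerIdeal R M
  set P : Submodule (TrivSqZeroExt R M) F := I • ⊤
  let θ := (TensorProduct.lid _ F).toLinearMap ∘ₗ I.subtype.rTensor F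
  have hθ : Function.Injective θ := (TensorProduct.lid _ F).injective.comp
    (Module.Flat.rTensor_preserves_injective_linearMap I.subtype I.injective_subtype)
  let μ := (quotTensorEquivQuotSMul F I).toLinearMap ∘ₗ (kerIdealToQuotient l).rTensor F
  have hμ (x : I) (w : F) :
      μ (x ⊗ₜ w) = P.mkQ ((inl (l x.1.snd) : TrivSqZeroExt R M) • w) := by
    simp only [μ, LinearMap.comp_apply, LinearMap.rTensor_tmul, kerIdealToQuotient_apply,
      LinearEquiv.coe_coe]
    exact quotTensorEquivQuotSMul_mk_tmul _ _ _
  have hrange : LinearMap.range (θ ∘ₗ N.subtype.lTensor I) = I • N := by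
    rw [Submodule.smul_eq_map₂, map₂_eq_range_lift_comp_mapIncl]
    congr 1
    ext x n
    rfl
  have hμN (s : I ⊗[TrivSqZeroExt R M] N) : μ (N.subtype.lTensor I s) ∈ N.map P.mkQ := by
    induction s using TensorProduct.induction_on with
    | zero => simp
    | tmul x n =>
      simpa [hμ] using Submodule.mem_map_of_mem (f := P.mkQ) (N.smul_mem (inl (l x.1.snd)) n.2)
    | add s t hs ht => simpa using add_mem hs ht
  obtain ⟨s, hs⟩ := hrange ▸ hz
  have hes : (⟨inr e, inr_mem_kerIdeal e⟩ : I) ⊗ₜ z = N.subtype.lTensor I s :=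
    hθ (by simp [θ, ← hs])
  have hzN : z ∈ (N.map P.mkQ).comap P.mkQ := by
    have h := hμN s
    rwa [← hes, hμ, snd_inr, hl, inl_one, one_smul] at h
  rwa [Submodule.comap_map_mkQ, sup_comm] at hzN

theorem kerIdeal_ne_top [Nontrivial R] : kerIdeal R M ≠ ⊤ :=
  (Ideal.ne_top_iff_one _).mpr (by simp [mem_kerIdeal])

theorem not_flat_of_existsAnnihilatedNotMemSmulTop {l : M →ₗ[R] R} {e : M} (hl : l e = 1)
    {P : Type*} [AddCommGroup P] [Module (TrivSqZeroExt R M) P]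
    (hP : ExistsAnnihilatedNotMemSmulTop (kerIdeal R M) P) :
    ¬ Module.Flat (TrivSqZeroExt R M) P := by
  intro hflat
  obtain ⟨x, hx, hxI⟩ := hP
  have hex : (inr e : TrivSqZeroExt R M) • x ∈
      kerIdeal R M • (⊥ : Submodule (TrivSqZeroExt R M) P) := by
    rw [hx _ (inr_mem_kerIdeal e)]
    exact zero_mem _
  exact hxI (by simpa using mem_sup_smul_top_of_inr_smul_mem hl hex)

theorem existsAnnihilatedNotMemSmulTop_ker {l : M →ₗ[R] R} {e : M} (hl : l e = 1)
    {P F : Type*} [AddCommGroup P] [Module (TrivSqZeroExt R M) P] [AddCommGroup F]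
    [Module (TrivSqZeroExt R M) F] [Module.Flat (TrivSqZeroExt R M) F]
    {f : F →ₗ[TrivSqZeroExt R M] P} (hf : Function.Surjective f)
    (hP : ExistsAnnihilatedNotMemSmulTop (kerIdeal R M) P) :
    ExistsAnnihilatedNotMemSmulTop (kerIdeal R M) (LinearMap.ker f) := by
  obtain ⟨x, hx, hxI⟩ := hP
  obtain ⟨z, rfl⟩ := hf x
  have hez : (inr e : TrivSqZeroExt R M) • z ∈ LinearMap.ker f := by
    rw [LinearMap.mem_ker, map_smul, hx _ (inr_mem_kerIdeal e)]
  refine ⟨⟨_, hez⟩, fun r hr ↦ Subtype.ext ?_, fun hmem ↦ hxI ?_⟩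
  · simp [smul_smul, mul_eq_zero_of_mem_kerIdeal hr (inr_mem_kerIdeal e)]
  · have hmem' := Submodule.mem_map_of_mem (f := (LinearMap.ker f).subtype) hmem
    rw [Submodule.map_smul'', Submodule.map_subtype_top] at hmem'
    obtain ⟨n, hn, w, hw, rfl⟩ := Submodule.mem_sup.mp (mem_sup_smul_top_of_inr_smul_mem hl hmem')
    rw [map_add, LinearMap.mem_ker.mp hn, zero_add]
    exact Submodule.smul_top_le_comap_smul_top _ f hw

end CommRing

theorem not_flatDimLE_of_existsAnnihilatedNotMemSmulTop {R M : Type u} [CommRing R]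
    [AddCommGroup M] [Module R M] [Module Rᵐᵒᵖ M] [IsCentralScalar R M] {l : M →ₗ[R] R} {e : M}
    (hl : l e = 1) (n : ℕ) (P : ModuleCat.{u} (TrivSqZeroExt R M))
    (hP : ExistsAnnihilatedNotMemSmulTop (kerIdeal R M) P) :
    ¬ FlatDimLE (TrivSqZeroExt R M) n P := by
  induction n generalizing P with
  | zero => exact not_flat_of_existsAnnihilatedNotMemSmulTop hl hP
  | succ n ih =>
    rintro ⟨F, f, hf, hF, hker⟩
    exact ih _ (existsAnnihilatedNotMemSmulTop_ker hl hf hP) hker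

end TrivSqZeroExt

/-- The trivial ring extension of a field by a nonzero vector space has
infinite weak global dimension. -/
theorem stmt_14 (K : Type u) [Field K] (E : Type u) [AddCommGroup E]
    [Module K E] [Module Kᵐᵒᵖ E] [IsCentralScalar K E] [Nontrivial E] :
    HasInfiniteWeakGlobalDimension (TrivSqZeroExt K E) := by
  intro n
  obtain ⟨e, he⟩ := exists_ne (0 : E)
  obtain ⟨l, hl⟩ := Module.Projective.exists_dual_eq_one K he
  exact ⟨.of _ (TrivSqZeroExt K E ⧸ TrivSqZeroExt.kerIdeal K E),
    TrivSqZeroExt.not_flatDimLE_of_existsAnnihilatedNotMemSmulTop hl n _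
      (existsAnnihilatedNotMemSmulTop_quotient TrivSqZeroExt.kerIdeal_ne_top)⟩
end

section
/- Let (A, m) be a local ring, E a nonzero A/m-vector space, and R = A ⋉ E the trivial ring extension. Then every element of R is either a zero divisor or a unit (R is a total ring of quotients), and hence R is a Prüfer ring. -/
/-!
If `a` is a unit of `A` then `(a, x)` is a unit of `A ⋉ E`. Otherwise `a ∈ m` annihilates `E`, so
`(a, x) * (0, y) = (0, a • y) = 0` for any `y ≠ 0`. Hence every regular element is a unit, a
regular ideal is the whole ring, and its image `1` in the fractional ideals is invertible.
-/

universe u v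

namespace TrivSqZeroExt

variable {R M : Type*} [CommRing R] [AddCommGroup M] [Module R M] [Module Rᵐᵒᵖ M]

theorem mul_inr_eq_zero_of_fst_smul_eq_zero {x : TrivSqZeroExt R M} {m : M} (h : x.fst • m = 0) :
    x * inr m = 0 := by
  ext <;> simp [h]

theorem isUnit_or_exists_ne_zero_mul_eq_zero [IsCentralScalar R M] [IsLocalRing R]
    [Nontrivial M]
    (hM : ∀ a ∈ IsLocalRing.maximalIdeal R, ∀ m : M, a • m = 0) (x : TrivSqZeroExt R M) :
    IsUnit x ∨ ∃ y : TrivSqZeroExt R M, y ≠ 0 ∧ x * y = 0 := by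
  rw [isUnit_iff_isUnit_fst]
  refine or_iff_not_imp_left.2 fun hx => ?_
  obtain ⟨m, hm⟩ := exists_ne (0 : M)
  exact ⟨inr m, (inr_injective.ne_iff' (inr_zero R)).2 hm,
    mul_inr_eq_zero_of_fst_smul_eq_zero (hM _ hx m)⟩

end TrivSqZeroExt

theorem isPruferRing_of_forall_isUnit_or_exists_mul_eq_zero {R : Type u} [CommRing R]
    (h : ∀ r : R, IsUnit r ∨ ∃ s : R, s ≠ 0 ∧ r * s = 0) : IsPruferRing R := by
  rintro I - ⟨x, hxI, hx⟩
  have hxu : IsUnit x :=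
    (h x).resolve_right fun ⟨s, hs, hxs⟩ => hs (hx.2 s (by rwa [mul_comm]))
  rw [Ideal.eq_top_of_isUnit_mem I hxI hxu, FractionalIdeal.coeIdeal_top]
  exact isUnit_one

/-- For `(A, m)` local and `E` a nonzero `A/m`-vector space, `R = A ⋉ E` is a
total ring of quotients and hence a Prüfer ring. -/
theorem stmt_15 (A : Type u) [CommRing A] [IsLocalRing A] (E : Type u)
    [AddCommGroup E] [Module A E] [Module Aᵐᵒᵖ E] [IsCentralScalar A E]
    [Nontrivial E]
    (hE : ∀ a ∈ IsLocalRing.maximalIdeal A, ∀ x : E, a • x = (0 : E)) :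
    (∀ r : TrivSqZeroExt A E,
        IsUnit r ∨ ∃ s : TrivSqZeroExt A E, s ≠ 0 ∧ r * s = 0) ∧
      IsPruferRing (TrivSqZeroExt A E) :=
  ⟨TrivSqZeroExt.isUnit_or_exists_ne_zero_mul_eq_zero hE,
    isPruferRing_of_forall_isUnit_or_exists_mul_eq_zero
      (TrivSqZeroExt.isUnit_or_exists_ne_zero_mul_eq_zero hE)⟩
end

section
/- Let (A, m) be a local ring, E a nonzero A/m-vector space, and R = A ⋉ E. Then R is a Gaussian ring if and only if A is a Gaussian ring. -/
universe u v

/-! If some coefficient of `p` is a unit, McCoy's theorem gives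
`c(pq) = c(q)`, so in `A ⋉ E` only pairs `f, g` whose coefficients all lie in the maximal ideal
`m ⋉ E` matter. Since `mE = 0`, the `E`-components vanish in products of such coefficients:
`x y = (x₀ y₀, 0)`. Hence `fg` and `c(f)c(g)` are computed from the images `f₀, g₀ ∈ A[X]`
embedded back along `A → A ⋉ E`, where the Gaussian property of `A` applies. Conversely `A` is a
quotient of `A ⋉ E`, and quotients of Gaussian rings are Gaussian. -/

open scoped Polynomial

section contentIdeal

variable {R : Type*} [CommRing R]

theorem contentIdeal_eq_polynomial_contentIdeal (p : R[X]) : contentIdeal p = p.contentIdeal := by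
  refine le_antisymm (Ideal.span_le.2 ?_) (Ideal.span_mono ?_)
  · rintro _ ⟨n, rfl⟩
    exact p.coeff_mem_contentIdeal n
  · intro r hr
    obtain ⟨n, -, rfl⟩ := Polynomial.mem_coeffs_iff.1 hr
    exact ⟨n, rfl⟩

theorem isGaussian_iff :
    IsGaussian R ↔ ∀ p q : R[X], (p * q).contentIdeal = p.contentIdeal * q.contentIdeal := by
  simp only [IsGaussian, contentIdeal_eq_polynomial_contentIdeal]

theorem Polynomial.mul_eq_mul_of_coeff_mul_coeff_eq {p q p' q' : R[X]}
    (h : ∀ i j, p.coeff i * q.coeff j = p'.coeff i * q'.coeff j) : p * q = p' * q' := by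
  ext n
  simp only [Polynomial.coeff_mul, h]

theorem Polynomial.contentIdeal_mul_contentIdeal_eq_of_coeff_mul_coeff_eq {p q p' q' : R[X]}
    (h : ∀ i j, p.coeff i * q.coeff j = p'.coeff i * q'.coeff j) :
    p.contentIdeal * q.contentIdeal = p'.contentIdeal * q'.contentIdeal := by
  simp only [← contentIdeal_eq_polynomial_contentIdeal]
  simp only [_root_.contentIdeal, Ideal.span_mul_span']
  congr 1
  ext x
  simp [Set.mem_mul, h]

theorem Polynomial.map_quotient_mk_eq_zero_iff {p : R[X]} {I : Ideal R} :
    p.map (Ideal.Quotient.mk I) = 0 ↔ p.contentIdeal ≤ I := by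
  rw [← contentIdeal_eq_bot_iff, contentIdeal_map_eq_map_contentIdeal,
    Ideal.map_eq_bot_iff_le_ker, Ideal.mk_ker]

theorem Polynomial.contentIdeal_mul_of_isUnit_coeff {p : R[X]} {n : ℕ} (hn : IsUnit (p.coeff n))
    (q : R[X]) : (p * q).contentIdeal = p.contentIdeal * q.contentIdeal := by
  rw [Ideal.eq_top_of_isUnit_mem _ (p.coeff_mem_contentIdeal n) hn, Ideal.top_mul]
  refine le_antisymm (contentIdeal_le_contentIdeal_of_dvd (dvd_mul_left q p)) ?_
  -- `p` stays a non-zero-divisor modulo `c(pq)`, which kills `p * q` and hence `q`.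
  set π := Ideal.Quotient.mk (p * q).contentIdeal
  have hpq : (p * q).map π = 0 := map_quotient_mk_eq_zero_iff.2 le_rfl
  have hp : p.map π ∈ nonZeroDivisors (Polynomial (R ⧸ (p * q).contentIdeal)) :=
    mem_nonzeroDivisors_of_coeff_mem n (by simpa using (hn.map π).mem_nonZeroDivisors)
  have hq : q.map π = 0 := by
    rw [Polynomial.map_mul] at hpq
    exact (mul_left_mem_nonZeroDivisors_eq_zero_iff hp).1 hpq
  exact map_quotient_mk_eq_zero_iff.1 hq

end contentIdeal

section IsGaussian

variable {R S : Type*} [CommRing R] [CommRing S]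

theorem IsGaussian.contentIdeal_map_mul_map (hR : IsGaussian R) (φ : R →+* S) (p q : R[X]) :
    (p.map φ * q.map φ).contentIdeal = (p.map φ).contentIdeal * (q.map φ).contentIdeal := by
  simp only [← Polynomial.map_mul, Polynomial.contentIdeal_map_eq_map_contentIdeal,
    isGaussian_iff.1 hR, Ideal.map_mul]

theorem IsGaussian.of_surjective (hR : IsGaussian R) {φ : R →+* S}
    (hφ : Function.Surjective φ) : IsGaussian S := by
  refine isGaussian_iff.2 fun p q => ?_
  obtain ⟨p, rfl⟩ := Polynomial.map_surjective φ hφ p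
  obtain ⟨q, rfl⟩ := Polynomial.map_surjective φ hφ q
  exact hR.contentIdeal_map_mul_map φ p q

theorem isGaussian_of_forall_not_isUnit_coeff
    (h : ∀ p q : R[X], (∀ n, ¬IsUnit (p.coeff n)) → (∀ n, ¬IsUnit (q.coeff n)) →
      (p * q).contentIdeal = p.contentIdeal * q.contentIdeal) : IsGaussian R := by
  refine isGaussian_iff.2 fun p q => ?_
  by_cases hp : ∃ n, IsUnit (p.coeff n)
  · obtain ⟨n, hn⟩ := hp
    exact p.contentIdeal_mul_of_isUnit_coeff hn q
  by_cases hq : ∃ n, IsUnit (q.coeff n)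
  · obtain ⟨n, hn⟩ := hq
    rw [mul_comm, mul_comm p.contentIdeal]
    exact q.contentIdeal_mul_of_isUnit_coeff hn p
  simp only [not_exists] at hp hq
  exact h p q hp hq

end IsGaussian

namespace TrivSqZeroExt

variable {A E : Type*} [CommRing A] [AddCommGroup E] [Module A E] [Module Aᵐᵒᵖ E]
  [IsCentralScalar A E]

theorem mul_eq_inl_mul_inl_of_smul_eq_zero {x y : TrivSqZeroExt A E} (hx : ∀ m : E, x.fst • m = 0)
    (hy : ∀ m : E, y.fst • m = 0) : x * y = inl x.fst * inl y.fst := by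
  ext
  · simp
  · simp [op_smul_eq_smul, hx, hy]

end TrivSqZeroExt

theorem stmt_16_general (A : Type u) [CommRing A] [IsLocalRing A] (E : Type u)
    [AddCommGroup E] [Module A E] [Module Aᵐᵒᵖ E] [IsCentralScalar A E]
    (hE : ∀ a ∈ IsLocalRing.maximalIdeal A, ∀ x : E, a • x = (0 : E)) :
    IsGaussian (TrivSqZeroExt A E) ↔ IsGaussian A := by
  refine ⟨fun h => h.of_surjective (φ := (TrivSqZeroExt.fstHom A A E).toRingHom)
    TrivSqZeroExt.fst_surjective, fun hA => isGaussian_of_forall_not_isUnit_coeff ?_⟩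
  intro f g hf hg
  have hann : ∀ x : TrivSqZeroExt A E, ¬IsUnit x → ∀ m : E, x.fst • m = 0 := fun x hx =>
    hE _ ((IsLocalRing.mem_maximalIdeal _).2 (mt TrivSqZeroExt.isUnit_iff_isUnit_fst.2 hx))
  set π : TrivSqZeroExt A E →+* A := (TrivSqZeroExt.fstHom A A E).toRingHom
  set ι : A →+* TrivSqZeroExt A E := TrivSqZeroExt.inlHom A E
  have hcoeff : ∀ i j, f.coeff i * g.coeff j =
      ((f.map π).map ι).coeff i * ((g.map π).map ι).coeff j := fun i j => by
    simpa [π, ι] using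
      TrivSqZeroExt.mul_eq_inl_mul_inl_of_smul_eq_zero (hann _ (hf i)) (hann _ (hg j))
  rw [Polynomial.mul_eq_mul_of_coeff_mul_coeff_eq hcoeff,
    Polynomial.contentIdeal_mul_contentIdeal_eq_of_coeff_mul_coeff_eq hcoeff,
    hA.contentIdeal_map_mul_map]

/-- For `(A, m)` local and `E` a nonzero `A/m`-vector space, `A ⋉ E` is
Gaussian iff `A` is Gaussian. -/
theorem stmt_16 (A : Type u) [CommRing A] [IsLocalRing A] (E : Type u)
    [AddCommGroup E] [Module A E] [Module Aᵐᵒᵖ E] [IsCentralScalar A E]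
    [Nontrivial E]
    (hE : ∀ a ∈ IsLocalRing.maximalIdeal A, ∀ x : E, a • x = (0 : E)) :
    IsGaussian (TrivSqZeroExt A E) ↔ IsGaussian A :=
  stmt_16_general A E hE
end

section
/- Let (A, m) be a local ring, E a nonzero A/m-vector space, and R = A ⋉ E. Then R is an arithmetical ring if and only if A is a field and dim_{A/m}(E) = 1. -/
universe u v

/-! `A ⋉ E` is local with maximal ideal `m ⋉ E`, so it is arithmetical iff it is chained, i.e. iff
divisibility is total. For `a ∈ m` and `e ≠ 0`, neither of `(a, 0)` and `(0, e)` can divide the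
other unless `a = 0`, so `m = 0`; and comparing `(0, x)` with `(0, e)` forces `x ∈ A e`.
Conversely, over a field every element with nonzero first coordinate is a unit, and the
remaining elements `(0, a e)` are totally ordered by divisibility. -/

open IsLocalRing TrivSqZeroExt

theorem isChainedRing_iff_dvd_total {R : Type*} [CommRing R] :
    IsChainedRing R ↔ ∀ x y : R, x ∣ y ∨ y ∣ x := by
  constructor
  · intro h x y
    refine (h (Ideal.span {y}) (Ideal.span {x})).imp (fun hle => ?_) (fun hle => ?_) <;>
      exact Ideal.mem_span_singleton.mp (hle (Ideal.mem_span_singleton_self _))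
  · intro h I J
    by_contra! hIJ
    obtain ⟨⟨x, hxI, hxJ⟩, ⟨y, hyJ, hyI⟩⟩ := And.imp Set.not_subset.mp Set.not_subset.mp hIJ
    rcases h x y with ⟨c, rfl⟩ | ⟨c, rfl⟩
    · exact hyI (I.mul_mem_right c hxI)
    · exact hxJ (J.mul_mem_right c hyJ)

theorem IsChainedRing.of_ringEquiv {R S : Type*} [CommRing R] [CommRing S] (e : R ≃+* S)
    (h : IsChainedRing R) : IsChainedRing S := by
  rw [isChainedRing_iff_dvd_total] at h ⊢
  intro x y
  simpa only [map_dvd_iff, RingEquiv.apply_symm_apply] using h (e.symm x) (e.symm y)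

theorem IsChainedRing.isLocalization {R S : Type*} [CommRing R] [CommRing S] [Algebra R S]
    (M : Submonoid R) [IsLocalization M S] (h : IsChainedRing R) : IsChainedRing S := by
  intro I J
  rw [← IsLocalization.map_under M S I, ← IsLocalization.map_under M S J]
  exact (h _ _).imp (Ideal.map_mono ·) (Ideal.map_mono ·)

theorem IsChainedRing.isArithmetical {R : Type*} [CommRing R] (h : IsChainedRing R) :
    IsArithmetical R :=
  fun P _ => h.isLocalization P.primeCompl

theorem isArithmetical_iff_isChainedRing {R : Type*} [CommRing R] [IsLocalRing R] :
    IsArithmetical R ↔ IsChainedRing R := by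
  refine ⟨fun h => ?_, IsChainedRing.isArithmetical⟩
  let e : R ≃ₐ[R] Localization.AtPrime (maximalIdeal R) :=
    IsLocalization.atUnits R (maximalIdeal R).primeCompl fun x hx => by
      simpa [IsUnit.mem_submonoid_iff] using (mem_maximalIdeal x).not.mp hx
  exact IsChainedRing.of_ringEquiv e.toRingEquiv.symm (h _ inferInstance)

namespace TrivSqZeroExt

variable {R M : Type*} [CommRing R] [AddCommGroup M] [Module R M] [Module Rᵐᵒᵖ M]
  [IsCentralScalar R M]

instance isLocalRing [IsLocalRing R] : IsLocalRing (TrivSqZeroExt R M) :=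
  .of_isUnit_or_isUnit_one_sub_self fun x => by
    simpa only [isUnit_iff_isUnit_fst, fst_sub, fst_one] using isUnit_or_isUnit_one_sub_self x.fst

theorem inr_dvd_inr_iff {x y : M} :
    (inr x : TrivSqZeroExt R M) ∣ inr y ↔ ∃ a : R, y = a • x := by
  constructor
  · rintro ⟨c, hc⟩
    exact ⟨c.fst, by simpa using congrArg snd hc⟩
  · rintro ⟨a, rfl⟩
    exact ⟨inl a, by simp [inr_mul_inl]⟩

theorem isField_of_dvd_total [IsLocalRing R] [Nontrivial M]
    (hM : ∀ a ∈ maximalIdeal R, ∀ x : M, a • x = 0)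
    (h : ∀ x y : TrivSqZeroExt R M, x ∣ y ∨ y ∣ x) : IsField R := by
  obtain ⟨e, he⟩ := exists_ne (0 : M)
  rw [isField_iff_maximalIdeal_eq, eq_bot_iff]
  intro a ha
  rcases h (inl a) (inr e) with ⟨c, hc⟩ | ⟨c, hc⟩
  · exact absurd (by simpa [hM a ha] using congrArg snd hc) he
  · simpa using congrArg fst hc

theorem exists_eq_smul_of_dvd_total (hR : IsField R)
    (h : ∀ x y : TrivSqZeroExt R M, x ∣ y ∨ y ∣ x) {e : M} (he : e ≠ 0) (x : M) :
    ∃ a : R, x = a • e := by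
  rcases h (inr x) (inr e) with hxe | hex
  · obtain ⟨a, rfl⟩ := inr_dvd_inr_iff.mp hxe
    have ha : a ≠ 0 := by rintro rfl; exact he (zero_smul R x)
    obtain ⟨b, hab⟩ := hR.mul_inv_cancel ha
    exact ⟨b, by rw [smul_smul, mul_comm, hab, one_smul]⟩
  · exact inr_dvd_inr_iff.mp hex

theorem dvd_total_of_isField (hR : IsField R) {e : M} (he : ∀ x : M, ∃ a : R, x = a • e)
    (x y : TrivSqZeroExt R M) : x ∣ y ∨ y ∣ x := by
  have isUnit_of_fst_ne_zero : ∀ z : TrivSqZeroExt R M, z.fst ≠ 0 → IsUnit z := fun z hz => by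
    obtain ⟨b, hb⟩ := hR.mul_inv_cancel hz
    exact isUnit_iff_isUnit_fst.mpr (.of_mul_eq_one _ hb)
  by_cases hx : x.fst = 0
  swap; · exact .inl (isUnit_of_fst_ne_zero x hx).dvd
  by_cases hy : y.fst = 0
  swap; · exact .inr (isUnit_of_fst_ne_zero y hy).dvd
  obtain ⟨a, ha⟩ := he x.snd
  obtain ⟨b, hb⟩ := he y.snd
  rw [show x = inr (a • e) from ext hx ha, show y = inr (b • e) from ext hy hb]
  by_cases ha0 : a = 0
  · exact .inr (by simp [ha0])
  obtain ⟨a', haa'⟩ := hR.mul_inv_cancel ha0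
  refine .inl (inr_dvd_inr_iff.mpr ⟨b * a', ?_⟩)
  rw [smul_smul, mul_assoc, mul_comm a', haa', mul_one]

end TrivSqZeroExt

/-- For `(A, m)` local and `E` a nonzero `A/m`-vector space, `A ⋉ E` is
arithmetical iff `A` is a field and `dim_{A/m} E = 1`. -/
theorem stmt_17 (A : Type u) [CommRing A] [IsLocalRing A] (E : Type u)
    [AddCommGroup E] [Module A E] [Module Aᵐᵒᵖ E] [IsCentralScalar A E]
    [Nontrivial E]
    (hE : ∀ a ∈ IsLocalRing.maximalIdeal A, ∀ x : E, a • x = (0 : E)) :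
    IsArithmetical (TrivSqZeroExt A E) ↔
      (IsField A ∧ ∃ e : E, e ≠ 0 ∧ ∀ x : E, ∃ a : A, x = a • e) := by
  rw [isArithmetical_iff_isChainedRing, isChainedRing_iff_dvd_total]
  constructor
  · intro h
    have hA := isField_of_dvd_total hE h
    obtain ⟨e, he⟩ := exists_ne (0 : E)
    exact ⟨hA, e, he, exists_eq_smul_of_dvd_total hA h he⟩
  · rintro ⟨hA, e, -, he⟩
    exact dvd_total_of_isField hA he
end

section
/- Let R be a commutative local ring and a, b nonzero elements of R such that the principal ideals (a) and (b) are incomparable. If the ideal (a, b) is quasi-projective as an R-module, then (a) ∩ (b) = 0, a² = b² = ab = 0, and Ann(a) = Ann(b). -/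
universe u v

theorem core_lemma (R : Type u) [CommRing R] [IsLocalRing R] (a b : R)
    (hab : ¬ (Ideal.span {a} : Ideal R) ≤ Ideal.span {b})
    (hba : ¬ (Ideal.span {b} : Ideal R) ≤ Ideal.span {a})
    (hqp : IsQuasiProjective R ↥(Ideal.span {a, b} : Ideal R))
    (c d e f x y : R) (hxy : x * a + y * b = 0) :
    (c * x + d * y) * a + (e * x + f * y) * b = 0 := by
  set M : Ideal R := Ideal.span {a, b} with hM
  have haM : a ∈ M := Ideal.subset_span (by simp)
  have hbM : b ∈ M := Ideal.subset_span (by simp)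
  set aM : M := ⟨a, haM⟩ with haM'
  set bM : M := ⟨b, hbM⟩ with hbM'
  set F : R × R →ₗ[R] M :=
    (LinearMap.toSpanSingleton R M aM).coprod (LinearMap.toSpanSingleton R M bM) with hF
  have hFapp : ∀ p : R × R, ((F p : M) : R) = p.1 * a + p.2 * b := by
    intro p
    simp [hF, LinearMap.toSpanSingleton_apply, haM', hbM', smul_eq_mul]
  have hFsurj : Function.Surjective F := by
    rintro ⟨m, hm⟩
    obtain ⟨u, v, huv⟩ := Ideal.mem_span_pair.mp hm
    exact ⟨(u, v), Subtype.ext (by rw [hFapp]; exact huv)⟩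
  have hmem : ∀ u v : R, u * a + v * b = 0 →
      u ∈ IsLocalRing.maximalIdeal R ∧ v ∈ IsLocalRing.maximalIdeal R := by
    intro u v huv
    constructor
    · by_contra hu
      have hu' : IsUnit u := by
        rwa [IsLocalRing.mem_maximalIdeal, mem_nonunits_iff, not_not] at hu
      obtain ⟨w, hw⟩ := hu'.exists_left_inv
      apply hab
      rw [Ideal.span_singleton_le_span_singleton]
      refine ⟨-(w * v), ?_⟩
      have : u * a = -(v * b) := by linear_combination huv
      calc a = w * (u * a) := by rw [← mul_assoc, hw, one_mul]
        _ = b * -(w * v) := by rw [this]; ring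
    · by_contra hv
      have hv' : IsUnit v := by
        rwa [IsLocalRing.mem_maximalIdeal, mem_nonunits_iff, not_not] at hv
      obtain ⟨w, hw⟩ := hv'.exists_left_inv
      apply hba
      rw [Ideal.span_singleton_le_span_singleton]
      refine ⟨-(w * u), ?_⟩
      have : v * b = -(u * a) := by linear_combination huv
      calc b = w * (v * b) := by rw [← mul_assoc, hw, one_mul]
        _ = a * -(w * u) := by rw [this]; ring
  set G : R × R →ₗ[R] R × R :=
    LinearMap.prod ((c • LinearMap.fst R R R) + (d • LinearMap.snd R R R))
      ((e • LinearMap.fst R R R) + (f • LinearMap.snd R R R)) with hG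
  have hGapp : ∀ p : R × R, G p = (c * p.1 + d * p.2, e * p.1 + f * p.2) := by
    intro p
    simp [hG, smul_eq_mul]
  set K := LinearMap.ker F with hK
  set N : Submodule R M := Submodule.map (F ∘ₗ G) K with hN
  have hker : K ≤ LinearMap.ker (N.mkQ ∘ₗ F ∘ₗ G) := by
    intro k hk
    simp only [LinearMap.mem_ker, LinearMap.comp_apply, Submodule.mkQ_apply,
      Submodule.Quotient.mk_eq_zero]
    exact ⟨k, hk, rfl⟩
  set E := F.quotKerEquivOfSurjective hFsurj with hE
  set gbar : M →ₗ[R] M ⧸ N :=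
    (K.liftQ (N.mkQ ∘ₗ F ∘ₗ G) hker) ∘ₗ E.symm.toLinearMap with hgbar
  have hEmk : ∀ p : R × R, E (Submodule.Quotient.mk p) = F p := by
    intro p
    simp [hE, LinearMap.quotKerEquivOfSurjective]
  have hgbarF : ∀ p : R × R, gbar (F p) = N.mkQ (F (G p)) := by
    intro p
    have h1 : E.symm (F p) = Submodule.Quotient.mk p := by
      apply E.injective
      rw [LinearEquiv.apply_symm_apply, hEmk]
    simp only [hgbar, LinearMap.comp_apply, LinearEquiv.coe_coe, h1, Submodule.liftQ_apply]
  obtain ⟨h, hh⟩ := hqp N gbar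
  obtain ⟨p₁, hp₁⟩ := hFsurj (h aM)
  obtain ⟨p₂, hp₂⟩ := hFsurj (h bM)
  set ψ : R × R →ₗ[R] R × R :=
    (LinearMap.toSpanSingleton R (R × R) p₁).coprod
      (LinearMap.toSpanSingleton R (R × R) p₂) with hψ
  have hFdecomp : ∀ p : R × R, F p = p.1 • aM + p.2 • bM := by
    intro p
    simp [hF, LinearMap.toSpanSingleton_apply]
  have hFψ : ∀ p : R × R, F (ψ p) = h (F p) := by
    intro p
    rw [hFdecomp p, map_add, map_smul, map_smul]
    have : ψ p = p.1 • p₁ + p.2 • p₂ := by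
      simp [hψ, LinearMap.toSpanSingleton_apply]
    rw [this, map_add, map_smul, map_smul, hp₁, hp₂]
  set θ : R × R →ₗ[R] M := F ∘ₗ (G - ψ) with hθ
  have hθapp : ∀ p : R × R, θ p = F (G p) - F (ψ p) := by
    intro p
    simp [hθ, map_sub]
  have hθN : ∀ p, θ p ∈ N := by
    intro p
    have hz : N.mkQ (θ p) = 0 := by
      rw [hθapp, map_sub, hFψ]
      have e2 : N.mkQ (h (F p)) = gbar (F p) := by
        have := congrArg (fun φ : M →ₗ[R] M ⧸ N => φ (F p)) hh
        simpa using this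
      rw [e2, ← hgbarF, sub_self]
    rwa [Submodule.mkQ_apply, Submodule.Quotient.mk_eq_zero] at hz
  set T := LinearMap.range θ with hT
  have hθsmul : ∀ p : R × R, θ p = p.1 • θ (1, 0) + p.2 • θ (0, 1) := by
    intro p
    have hp : p = p.1 • ((1 : R), (0 : R)) + p.2 • ((0 : R), (1 : R)) := by
      rw [Prod.smul_mk, Prod.smul_mk, Prod.mk_add_mk]
      simp
    rw [← map_smul, ← map_smul, ← map_add, ← hp]
  have hTN : T ≤ N := by
    rintro _ ⟨p, rfl⟩
    exact hθN p
  have hNT : N ≤ (IsLocalRing.maximalIdeal R) • T := by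
    rintro _ ⟨k, hk, rfl⟩
    have hFk : F k = 0 := hk
    have hθk : (F ∘ₗ G) k = θ k := by
      rw [LinearMap.comp_apply, hθapp, hFψ, hFk, map_zero, sub_zero]
    rw [hθk]
    have hcoord : k.1 ∈ IsLocalRing.maximalIdeal R ∧ k.2 ∈ IsLocalRing.maximalIdeal R := by
      apply hmem
      have := congrArg (fun m : M => (m : R)) hFk
      simpa [hFapp] using this
    rw [hθsmul k]
    exact Submodule.add_mem _
      (Submodule.smul_mem_smul hcoord.1 (LinearMap.mem_range.mpr ⟨(1, 0), rfl⟩))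
      (Submodule.smul_mem_smul hcoord.2 (LinearMap.mem_range.mpr ⟨(0, 1), rfl⟩))
  have hTfg : T.FG := by
    rw [Submodule.fg_def]
    refine ⟨{θ (1, 0), θ (0, 1)}, (Set.finite_singleton _).insert _,
      le_antisymm ?_ ?_⟩
    · rw [Submodule.span_le]
      rintro t (h1 | h1) <;> rw [h1] <;> exact LinearMap.mem_range.mpr ⟨_, rfl⟩
    · rintro _ ⟨p, rfl⟩
      rw [hθsmul p]
      refine Submodule.add_mem _ ?_ ?_ <;>
        exact Submodule.smul_mem _ _ (Submodule.subset_span (by simp))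
  have hTbot : T = ⊥ := by
    refine Submodule.eq_bot_of_le_smul_of_le_jacobson_bot (IsLocalRing.maximalIdeal R) T hTfg
      (le_trans hTN hNT) ?_
    rw [IsLocalRing.jacobson_eq_maximalIdeal (⊥ : Ideal R) bot_ne_top]
  have hkK : ((x, y) : R × R) ∈ K := by
    rw [hK, LinearMap.mem_ker]
    exact Subtype.ext (by rw [hFapp]; exact hxy)
  have hθxy : θ (x, y) = 0 := by
    have : θ (x, y) ∈ T := LinearMap.mem_range.mpr ⟨(x, y), rfl⟩
    rwa [hTbot, Submodule.mem_bot] at this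
  have hFGxy : F (G (x, y)) = 0 := by
    have hFk : F ((x, y) : R × R) = 0 := hkK
    have : F (G (x, y)) = θ (x, y) := by
      rw [hθapp, hFψ, hFk, map_zero, sub_zero]
    rw [this, hθxy]
  have := congrArg (fun m : M => (m : R)) hFGxy
  simpa [hFapp, hGapp] using this

/-- If `(a)` and `(b)` are incomparable and `(a, b)` is quasi-projective over a
local ring, then `(a) ∩ (b) = 0`, `a² = b² = ab = 0`, and `Ann(a) = Ann(b)`. -/
theorem stmt_18 (R : Type u) [CommRing R] [IsLocalRing R] (a b : R)
    (ha : a ≠ 0) (hb : b ≠ 0)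
    (hab : ¬ (Ideal.span {a} : Ideal R) ≤ Ideal.span {b})
    (hba : ¬ (Ideal.span {b} : Ideal R) ≤ Ideal.span {a})
    (hqp : IsQuasiProjective R ↥(Ideal.span {a, b} : Ideal R)) :
    (Ideal.span {a} ⊓ Ideal.span {b} : Ideal R) = ⊥ ∧
      a ^ 2 = 0 ∧ b ^ 2 = 0 ∧ a * b = 0 ∧
      (∀ r : R, r * a = 0 ↔ r * b = 0) := by
  have L := core_lemma R a b hab hba hqp
  have proj : ∀ x y : R, x * a + y * b = 0 → x * a = 0 := by
    intro x y h
    have := L 1 0 0 0 x y h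
    simpa using this
  have ann : ∀ r : R, r * a = 0 ↔ r * b = 0 := by
    intro r
    constructor
    · intro h
      have h0 : r * a + 0 * b = 0 := by rw [h, zero_mul, add_zero]
      have := L 0 0 1 0 r 0 h0
      simpa using this
    · intro h
      have h0 : 0 * a + r * b = 0 := by rw [h, zero_mul, zero_add]
      have := L 0 1 0 0 0 r h0
      simpa using this
  have hab0 : a * b = 0 := by
    have h0 : b * a + (-a) * b = 0 := by ring
    have := proj b (-a) h0
    rw [mul_comm] at this
    exact this
  have ha2 : a ^ 2 = 0 := by
    have := (ann a).mpr hab0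
    rw [pow_two]; exact this
  have hb2 : b ^ 2 = 0 := by
    have hba0 : b * a = 0 := by rw [mul_comm]; exact hab0
    have := (ann b).mp hba0
    rw [pow_two]; exact this
  have hinf : (Ideal.span {a} ⊓ Ideal.span {b} : Ideal R) = ⊥ := by
    apply le_antisymm _ bot_le
    rintro z ⟨hz1, hz2⟩
    obtain ⟨u, hu⟩ := Ideal.mem_span_singleton'.mp hz1
    obtain ⟨v, hv⟩ := Ideal.mem_span_singleton'.mp hz2
    have h0 : u * a + (-v) * b = 0 := by linear_combination hu - hv
    have := proj u (-v) h0
    rw [Submodule.mem_bot, ← hu]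
    exact this
  exact ⟨hinf, ha2, hb2, hab0, ann⟩
end

section
/- Let (R, m) be a commutative local ring with m² = 0. Then every finitely generated ideal of R is quasi-projective (R is an fqp-ring). -/
universe u v

/-!
The ideal `R` is free. A proper ideal `I` lies in `m`, so `m I ⊆ m² = 0`: then `I` is a vector
space over `R ⧸ m`, hence a semisimple `R`-module, and a semisimple module is quasi-projective
because a map `M → M ⧸ N` lifts through the isomorphism `N' ≅ M ⧸ N` for a complement `N'` of `N`.
-/

section QuasiProjective

variable {R : Type u} [CommRing R] {M : Type v} [AddCommGroup M] [Module R M]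

theorem Module.Projective.isQuasiProjective [Module.Projective R M] : IsQuasiProjective R M :=
  fun N g ↦ Module.projective_lifting_property N.mkQ g N.mkQ_surjective

theorem IsSemisimpleModule.isQuasiProjective [IsSemisimpleModule R M] : IsQuasiProjective R M := by
  intro N g
  obtain ⟨N', hN'⟩ := exists_isCompl N
  refine ⟨N'.subtype ∘ₗ (Submodule.quotientEquivOfIsCompl N N' hN').toLinearMap ∘ₗ g, ?_⟩
  ext x
  exact Submodule.mk_quotientEquivOfIsCompl_apply hN' (g x)

theorem Module.IsTorsionBySet.isSemisimpleModule_of_isMaximal {m : Ideal R} [m.IsMaximal]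
    (hM : Module.IsTorsionBySet R M m) : IsSemisimpleModule R M :=
  letI := hM.module
  letI := Ideal.Quotient.field m
  hM.isSemisimpleModule_iff.mp inferInstance

end QuasiProjective

theorem Ideal.isTorsionBySet_of_mul_eq_bot {R : Type u} [CommRing R] {I J : Ideal R}
    (hJI : J * I = ⊥) : Module.IsTorsionBySet R I J := by
  intro x r
  ext
  simpa [← Ideal.mem_bot, ← hJI] using Ideal.mul_mem_mul r.2 x.2

/-- A local ring `(R, m)` with `m² = 0` is an fqp-ring: every finitely
generated ideal is quasi-projective. -/
theorem stmt_19 (R : Type u) [CommRing R] [IsLocalRing R]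
    (h : IsLocalRing.maximalIdeal R ^ 2 = ⊥) :
    ∀ I : Ideal R, I.FG → IsQuasiProjective R ↥I := by
  intro I _
  by_cases hI : I = ⊤
  · have : Module.Projective R I := .of_equiv (LinearEquiv.ofTop I hI).symm
    exact Module.Projective.isQuasiProjective
  · have hmI : IsLocalRing.maximalIdeal R * I = ⊥ := le_bot_iff.mp <| calc
      IsLocalRing.maximalIdeal R * I ≤ IsLocalRing.maximalIdeal R ^ 2 := by
        rw [pow_two]; exact Ideal.mul_mono_right (IsLocalRing.le_maximalIdeal hI)
      _ = ⊥ := h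
    have := (Ideal.isTorsionBySet_of_mul_eq_bot hmI).isSemisimpleModule_of_isMaximal
    exact IsSemisimpleModule.isQuasiProjective
end
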